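/- arXiv:2103.15063 — 2 statements merged into one kernel-verified Lean document; each statement's English description precedes it below -/
import Mathlib

section
/- Let n be an even natural number with 4 ≤ n and suppose 4 divides n. Then for all real κ, η, the Wiener index of the saturated fuzzy cycle satisfies WI(n,κ,η) = (n^3/16)·(κ + η). -/
/-- Edge weight: the edge from `i` to `i+1` has weight `κ` if `i.val` is even,
and `η` if `i.val` is odd. -/
noncomputable def w (n : ℕ) (κ η : ℝ) (i : ZMod n) : ℝ :=
  if Even i.val then κ else η

/-- Forward arc weight: `A u k = Σ_{j=0}^{k-1} w (u + j)`. -/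
noncomputable def A (n : ℕ) (κ η : ℝ) (u : ZMod n) (k : ℕ) : ℝ :=
  ∑ j ∈ Finset.range k, w n κ η (u + (j : ZMod n))

/-- Cycle distance: `min (m, n - m)` where `v = u + m`, `0 ≤ m < n`. -/
def cdist (n : ℕ) (u v : ZMod n) : ℕ :=
  min (v - u).val (n - (v - u).val)

/-- Geodesic weight between `u` and `v`. -/
noncomputable def ds (n : ℕ) (κ η : ℝ) (u v : ZMod n) : ℝ :=
  if u = v then 0
  else if cdist n u v < n / 2 then
    (if v = u + (cdist n u v : ZMod n) then A n κ η u (cdist n u v)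
     else A n κ η v (cdist n u v))
  else min (A n κ η u (n / 2)) (A n κ η v (n / 2))

/-- Wiener index: sum of `ds` over unordered pairs of distinct vertices. -/
noncomputable def WI (n : ℕ) [NeZero n] (κ η : ℝ) : ℝ :=
  (1 / 2) * ∑ u : ZMod n, ∑ v : ZMod n, ds n κ η u v

/-!
For `0 < m < n` the geodesic from `u` to `u + m` is the arc `A u m` when `2m < n` and the arc
`A (u + m) (n - m)` when `2m > n`; summed over all starting points, an arc of length `k`
covers every edge `k` times and contributes `k · (n/2)(κ + η)`. When `2m = n`, `4 ∣ n` makes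
`n/2` even, so both half-cycles weigh `(n/4)(κ + η)`. Hence offset `m` contributes
`min m (n - m) · (n/2)(κ + η)`, and `∑_{m<n} min m (n - m) = n²/4`.
-/

open Finset

theorem Fintype.sum_comp_add_right {G M : Type*} [AddGroup G] [Fintype G] [AddCommMonoid M]
    (f : G → M) (c : G) : ∑ x, f (x + c) = ∑ x, f x :=
  Equiv.sum_comp (Equiv.addRight c) f

theorem Finset.sum_range_min_sub_two_mul (k : ℕ) :
    ∑ m ∈ range (2 * k), min m (2 * k - m) = k ^ 2 := by
  rw [two_mul, sum_range_add, ← sum_add_distrib,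
    sum_congr rfl fun i hi => show min i (k + k - i) + min (k + i) (k + k - (k + i)) = k by
      have := mem_range.1 hi; omega]
  simp [sq]

namespace ZMod

variable {n : ℕ} {M : Type*} [AddCommMonoid M]

theorem sum_eq_sum_range [NeZero n] (f : ZMod n → M) :
    ∑ v : ZMod n, f v = ∑ m ∈ range n, f m :=
  sum_nbij' val (fun m => (m : ZMod n)) (fun a _ => mem_range.2 a.val_lt)
    (fun _ _ => mem_univ _) (fun a _ => natCast_zmod_val a)
    (fun _ ha => val_natCast_of_lt (mem_range.1 ha)) (fun a _ => by rw [natCast_zmod_val])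

theorem sum_eq_sum_range_add [NeZero n] (f : ZMod n → M) (u : ZMod n) :
    ∑ v : ZMod n, f v = ∑ m ∈ range n, f (u + m) := by
  rw [← sum_eq_sum_range fun x => f (u + x)]
  exact (Equiv.sum_comp (Equiv.addLeft u) f).symm

theorem even_val_iff_castHom_eq_zero [NeZero n] (h2 : 2 ∣ n) (x : ZMod n) :
    Even x.val ↔ castHom h2 (ZMod 2) x = 0 := by
  rw [← natCast_eq_zero_iff_even, natCast_val, castHom_apply]

theorem even_val_add_one_iff [NeZero n] (h2 : 2 ∣ n) (x : ZMod n) :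
    Even (x + 1).val ↔ ¬Even x.val := by
  simp only [even_val_iff_castHom_eq_zero h2, map_add, map_one]
  generalize castHom h2 (ZMod 2) x = a
  revert a
  decide

end ZMod

section SaturatedCycle

variable {n : ℕ} (κ η : ℝ)

theorem w_add_w_add_one [NeZero n] (hE : Even n) (x : ZMod n) :
    w n κ η x + w n κ η (x + 1) = κ + η := by
  by_cases hx : Even x.val
  · simp [w, hx, ZMod.even_val_add_one_iff (even_iff_two_dvd.1 hE)]
  · simp [w, hx, ZMod.even_val_add_one_iff (even_iff_two_dvd.1 hE), add_comm]

theorem A_succ (u : ZMod n) (k : ℕ) : A n κ η u (k + 1) = A n κ η u k + w n κ η (u + k) :=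
  sum_range_succ _ _

theorem A_two_mul [NeZero n] (hE : Even n) (u : ZMod n) (k : ℕ) :
    A n κ η u (2 * k) = k * (κ + η) := by
  induction k with
  | zero => simp [A]
  | succ k ih =>
    rw [mul_add, mul_one, A_succ, A_succ, ih, add_assoc, Nat.cast_succ, ← add_assoc u,
      w_add_w_add_one κ η hE]
    push_cast
    ring

theorem sum_A [NeZero n] (k : ℕ) :
    ∑ u : ZMod n, A n κ η u k = k * ∑ u : ZMod n, w n κ η u := by
  simp only [A]
  rw [sum_comm]
  simp only [Fintype.sum_comp_add_right (w n κ η), sum_const, card_range, nsmul_eq_mul]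

theorem sum_w [NeZero n] (hE : Even n) : ∑ u : ZMod n, w n κ η u = n / 2 * (κ + η) := by
  obtain ⟨k, hk⟩ := hE
  have h := A_two_mul κ η ⟨k, hk⟩ 0 k
  rw [two_mul, ← hk] at h
  unfold A at h
  rw [ZMod.sum_eq_sum_range_add _ 0, h, hk]
  push_cast
  ring

theorem cdist_add_natCast {m : ℕ} (hm : m < n) (u : ZMod n) :
    cdist n u (u + m) = min m (n - m) := by
  rw [cdist, add_sub_cancel_left, ZMod.val_natCast_of_lt hm]

theorem self_ne_add_natCast {m : ℕ} (hm0 : 0 < m) (hm : m < n) (u : ZMod n) : u ≠ u + m := by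
  intro h
  have := congrArg ZMod.val (add_eq_left.1 h.symm)
  rw [ZMod.val_natCast_of_lt hm, ZMod.val_zero] at this
  omega

theorem ds_add_natCast_of_two_mul_lt (hE : Even n) {m : ℕ} (hm0 : 0 < m) (h : 2 * m < n)
    (u : ZMod n) :
    ds n κ η u (u + m) = A n κ η u m := by
  obtain ⟨k, hk⟩ := hE
  rw [ds, if_neg (self_ne_add_natCast hm0 (by omega) u), cdist_add_natCast (by omega),
    min_eq_left (by omega), if_pos (by omega), if_pos rfl]

theorem ds_add_natCast_of_lt_two_mul (hE : Even n) {m : ℕ} (hm : m < n) (h : n < 2 * m)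
    (u : ZMod n) :
    ds n κ η u (u + m) = A n κ η (u + m) (n - m) := by
  obtain ⟨k, hk⟩ := hE
  have hne : u + (m : ZMod n) ≠ u + ((n - m : ℕ) : ZMod n) := by
    intro h'
    have := congrArg ZMod.val (add_left_cancel h')
    rw [ZMod.val_natCast_of_lt hm, ZMod.val_natCast_of_lt (by omega)] at this
    omega
  rw [ds, if_neg (self_ne_add_natCast (by omega) hm u), cdist_add_natCast hm,
    min_eq_right (by omega), if_pos (by omega), if_neg hne]

theorem ds_add_natCast_of_two_mul_eq [NeZero n] {m : ℕ} (hm : Even m) (h : 2 * m = n)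
    (u : ZMod n) : ds n κ η u (u + m) = m / 2 * (κ + η) := by
  obtain ⟨k, rfl⟩ := hm
  have hE : Even n := ⟨k + k, by omega⟩
  have hk0 : 0 < k + k := by have := NeZero.ne n; omega
  have hkn : k + k < n := by omega
  rw [ds, if_neg (self_ne_add_natCast hk0 hkn u), cdist_add_natCast hkn,
    min_eq_left (by omega), if_neg (by omega), show n / 2 = 2 * k by omega,
    A_two_mul κ η hE, A_two_mul κ η hE, min_self]
  push_cast
  ring

theorem sum_ds_add_natCast [NeZero n] (h4 : 4 ∣ n) {m : ℕ} (hm : m < n) :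
    ∑ u : ZMod n, ds n κ η u (u + m) = min m (n - m) * (n / 2 * (κ + η)) := by
  have hE : Even n := even_iff_two_dvd.2 (dvd_trans ⟨2, rfl⟩ h4)
  rcases m.eq_zero_or_pos with rfl | hm0
  · simp [ds]
  rcases lt_trichotomy (2 * m) n with h | h | h
  · simp_rw [ds_add_natCast_of_two_mul_lt κ η hE hm0 h, sum_A, sum_w κ η hE,
      min_eq_left (by omega : m ≤ n - m)]
  · have hm : Even m := by
      obtain ⟨k, hk⟩ := h4
      exact ⟨k, by omega⟩
    simp_rw [ds_add_natCast_of_two_mul_eq κ η hm h, sum_const, card_univ, ZMod.card,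
      nsmul_eq_mul, min_eq_left (by omega : m ≤ n - m), ← h]
    push_cast
    ring
  · simp_rw [ds_add_natCast_of_lt_two_mul κ η hE hm h,
      Fintype.sum_comp_add_right (fun v => A n κ η v (n - m)), sum_A, sum_w κ η hE,
      min_eq_right (by omega : n - m ≤ m)]

end SaturatedCycle

theorem wiener_index_saturated_cycle_four_dvd_general
    (n : ℕ) [NeZero n] (hdvd : 4 ∣ n) :
    ∀ κ η : ℝ, WI n κ η = ((n : ℝ) ^ 3 / 16) * (κ + η) := by
  intro κ η
  rw [WI, sum_congr rfl fun u _ => ZMod.sum_eq_sum_range_add (ds n κ η u) u, sum_comm,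
    sum_congr rfl fun m hm => sum_ds_add_natCast κ η hdvd (mem_range.1 hm), ← sum_mul,
    ← Nat.cast_sum]
  obtain ⟨k, hk⟩ := hdvd
  rw [show n = 2 * (2 * k) by omega, sum_range_min_sub_two_mul]
  push_cast
  ring

theorem wiener_index_saturated_cycle_four_dvd
    (n : ℕ) [NeZero n] (hE : Even n) (h4 : 4 ≤ n) (hdvd : 4 ∣ n) :
    ∀ κ η : ℝ, WI n κ η = ((n : ℝ) ^ 3 / 16) * (κ + η) :=
  wiener_index_saturated_cycle_four_dvd_general n hdvd
end

section
/- Let n be an even natural number with 4 ≤ n such that n ≡ 2 (mod 4), and let κ, η be real numbers with η ≤ κ. Then for every u : ZMod n, the antipodal geodesic weight satisfies d_s(u, u + n/2) = ((n−2)/4)·κ + ((n+2)/4)·η, and the sum of d_s over the n/2 antipodal unordered pairs equals (n/2)·( ((n−2)/4)·κ + ((n+2)/4)·η ). -/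
open Finset

lemma sum_range_two_mul_add_one_ite_even (κ η : ℝ) (s t : ℕ) :
    ∑ j ∈ range (2 * t + 1), (if Even (s + j) then κ else η)
      = t * (κ + η) + (if Even s then κ else η) := by
  induction t with
  | zero => simp
  | succ t ih =>
    have hodd : Even (s + (2 * t + 1)) ↔ ¬Even s := by simp [Nat.even_add]
    have heven : Even (s + (2 * t + 1 + 1)) ↔ Even s := by simp [Nat.even_add, parity_simps]
    rw [show 2 * (t + 1) + 1 = 2 * t + 1 + 1 + 1 by ring, sum_range_succ, sum_range_succ, ih]
    by_cases hs : Even s <;>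
      simp only [hodd, heven, hs, ↓reduceIte, not_true_eq_false, not_false_eq_true] <;>
      push_cast <;> ring

section EvenCycle

variable {n : ℕ} [NeZero n] (κ η : ℝ)

lemma even_val_add_natCast_iff (hn : 2 ∣ n) (u : ZMod n) (j : ℕ) :
    Even (u + (j : ZMod n)).val ↔ Even (u.val + j) := by
  rw [ZMod.val_add, ZMod.val_natCast, Nat.even_iff, Nat.even_iff, Nat.mod_mod_of_dvd _ hn,
    Nat.add_mod, Nat.mod_mod_of_dvd _ hn, ← Nat.add_mod]

lemma w_add_natCast (hn : 2 ∣ n) (u : ZMod n) (j : ℕ) :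
    w n κ η (u + j) = if Even (u.val + j) then κ else η := by
  simp only [w, even_val_add_natCast_iff hn]

lemma A_two_mul_add_one (hn : 2 ∣ n) (u : ZMod n) (t : ℕ) :
    A n κ η u (2 * t + 1) = t * (κ + η) + w n κ η u := by
  rw [A, sum_congr rfl fun j _ => w_add_natCast κ η hn u j, sum_range_two_mul_add_one_ite_even, w]

lemma min_w_w_add_odd (hn : 2 ∣ n) (hηκ : η ≤ κ) (u : ZMod n) {m : ℕ} (hm : Odd m) :
    min (w n κ η u) (w n κ η (u + m)) = η := by
  rw [w_add_natCast κ η hn, w]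
  by_cases hu : Even u.val
  · simp [hu, Nat.even_add, Nat.not_even_iff_odd.mpr hm, hηκ]
  · simp [hu, Nat.even_add, hm, hηκ]

end EvenCycle

lemma ds_add_half (n : ℕ) (κ η : ℝ) (hn : 2 ≤ n) (u : ZMod n) :
    ds n κ η u (u + ((n / 2 : ℕ) : ZMod n))
      = min (A n κ η u (n / 2)) (A n κ η (u + ((n / 2 : ℕ) : ZMod n)) (n / 2)) := by
  have hval : (u + ((n / 2 : ℕ) : ZMod n) - u).val = n / 2 := by
    rw [add_sub_cancel_left, ZMod.val_natCast, Nat.mod_eq_of_lt (by omega)]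
  have hne : u ≠ u + ((n / 2 : ℕ) : ZMod n) := fun h => by
    rw [← h, sub_self, ZMod.val_zero] at hval
    omega
  have hcdist : cdist n u (u + ((n / 2 : ℕ) : ZMod n)) = n / 2 := by
    rw [cdist, hval]
    omega
  rw [ds, if_neg hne, hcdist, if_neg (lt_irrefl _)]

theorem antipodal_contribution_two_mod_four_general
    (n : ℕ) [NeZero n] (hmod : n % 4 = 2)
    (κ η : ℝ) (hηκ : η ≤ κ) :
    (∀ u : ZMod n, ds n κ η u (u + ((n / 2 : ℕ) : ZMod n))
        = (((n : ℝ) - 2) / 4) * κ + (((n : ℝ) + 2) / 4) * η) ∧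
    (1 / 2) * ∑ u : ZMod n, ds n κ η u (u + ((n / 2 : ℕ) : ZMod n))
      = ((n : ℝ) / 2) * ((((n : ℝ) - 2) / 4) * κ + (((n : ℝ) + 2) / 4) * η) := by
  obtain ⟨t, hnt⟩ : ∃ t, n = 4 * t + 2 := ⟨n / 4, by omega⟩
  have hn : 2 ∣ n := ⟨2 * t + 1, by omega⟩
  have hhalf : n / 2 = 2 * t + 1 := by omega
  have hantipodal (u : ZMod n) : ds n κ η u (u + ((n / 2 : ℕ) : ZMod n))
      = (((n : ℝ) - 2) / 4) * κ + (((n : ℝ) + 2) / 4) * η := by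
    rw [ds_add_half n κ η (by omega), hhalf, A_two_mul_add_one κ η hn,
      A_two_mul_add_one κ η hn, min_add_add_left,
      min_w_w_add_odd κ η hn hηκ u (odd_two_mul_add_one t), hnt]
    push_cast
    ring
  refine ⟨hantipodal, ?_⟩
  rw [sum_congr rfl fun u _ => hantipodal u, sum_const, card_univ, ZMod.card, nsmul_eq_mul]
  ring

theorem antipodal_contribution_two_mod_four
    (n : ℕ) [NeZero n] (hE : Even n) (h4 : 4 ≤ n) (hmod : n % 4 = 2)
    (κ η : ℝ) (hηκ : η ≤ κ) :
    (∀ u : ZMod n, ds n κ η u (u + ((n / 2 : ℕ) : ZMod n))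
        = (((n : ℝ) - 2) / 4) * κ + (((n : ℝ) + 2) / 4) * η) ∧
    (1 / 2) * ∑ u : ZMod n, ds n κ η u (u + ((n / 2 : ℕ) : ZMod n))
      = ((n : ℝ) / 2) * ((((n : ℝ) - 2) / 4) * κ + (((n : ℝ) + 2) / 4) * η) :=
  antipodal_contribution_two_mod_four_general n hmod κ η hηκ
end
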